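/- arXiv:1405.2642 — 10 statements merged into one kernel-verified Lean document; each statement's English description precedes it below -/
import Mathlib

section
/- Let ≤ be a rational order for (S,M) and assume M ⊆ S. Define the revision operator r : Set W → Set W by r a = Min(a ∩ S, ≤) for every sentence a ⊆ W. Then r satisfies the revision postulates for (S,M), i.e. (∔1)–(∔4), (∔6) and (∔7) all hold. -/
/-- `Min(F, ≤)`: elements of `F` with no strictly smaller element in `F`,
where `y < x` means `le y x ∧ ¬ le x y`. -/
def MinSet {W : Type*} (le : W → W → Prop) (F : Set W) : Set W :=
  {x | x ∈ F ∧ ¬ ∃ y ∈ F, le y x ∧ ¬ le x y}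

/-- `le` is a rational order for `(S, M)`. -/
def RationalOrder {W : Type*} (le : W → W → Prop) (S M : Set W) : Prop :=
  (∀ x ∈ S, le x x) ∧
  (∀ x ∈ S, ∀ y ∈ S, ∀ z ∈ S, le x y → le y z → le x z) ∧
  (∀ x ∈ S, ∀ y ∈ S, le x y ∨ le y x) ∧
  MinSet le S = M ∧
  (∀ F ⊆ S, F.Nonempty → (MinSet le F).Nonempty)

/-- `r` satisfies the revision postulates for `(S, M)`. -/
def RevisionPostulates {W : Type*} (S M : Set W) (r : Set W → Set W) : Prop :=
  ∀ a b : Set W,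
    r a ⊆ S ∧
    r a ⊆ a ∧
    ((a ∩ S).Nonempty ↔ (r a).Nonempty) ∧
    ((M ∩ a).Nonempty → r a = M ∩ a) ∧
    r a ∩ b ⊆ r (a ∩ b) ∧
    ((r a ∩ b).Nonempty → r (a ∩ b) ⊆ r a ∩ b)

/-!
For a total preorder on `S` and `F ⊆ S`, always `Min(F) ∩ b ⊆ Min(F ∩ b)`, with equality as soon
as `Min(F)` meets `b`: an element `z ∈ Min(F) ∩ b` lies below all of `F`, so anything strictly
below some `x ∈ Min(F ∩ b)` inside `F` would put `z` strictly below `x` inside `F ∩ b`.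
Vacuity is the case `F = S` (where `Min(S) = M` by faithfulness), and (∔7) the case `F = a ∩ S`.
-/

namespace MinSet

variable {W : Type*} {le : W → W → Prop} {S F : Set W}

theorem inter_subset (b : Set W) : MinSet le F ∩ b ⊆ MinSet le (F ∩ b) :=
  fun _ ⟨⟨hxF, hxmin⟩, hxb⟩ =>
    ⟨⟨hxF, hxb⟩, fun ⟨y, hy, hlt⟩ => hxmin ⟨y, hy.1, hlt⟩⟩

theorem le_of_mem (htot : ∀ x ∈ S, ∀ y ∈ S, le x y ∨ le y x) (hF : F ⊆ S)
    {x y : W} (hx : x ∈ MinSet le F) (hy : y ∈ F) : le x y := by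
  rcases htot x (hF hx.1) y (hF hy) with hxy | hyx
  · exact hxy
  · by_contra hxy
    exact hx.2 ⟨y, hy, hyx, hxy⟩

theorem inter_eq_of_nonempty
    (htrans : ∀ x ∈ S, ∀ y ∈ S, ∀ z ∈ S, le x y → le y z → le x z)
    (htot : ∀ x ∈ S, ∀ y ∈ S, le x y ∨ le y x) (hF : F ⊆ S) {b : Set W}
    (hne : (MinSet le F ∩ b).Nonempty) : MinSet le (F ∩ b) = MinSet le F ∩ b := by
  refine Set.Subset.antisymm ?_ (inter_subset b)
  obtain ⟨z, hzmin, hzb⟩ := hne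
  have hzS := hF hzmin.1
  rintro x ⟨⟨hxF, hxb⟩, hxmin⟩
  have hxS := hF hxF
  refine ⟨⟨hxF, ?_⟩, hxb⟩
  rintro ⟨y, hyF, hyx, hxy⟩
  have hzy : le z y := le_of_mem htot hF hzmin hyF
  have hyS := hF hyF
  exact hxmin ⟨z, ⟨hzmin.1, hzb⟩, htrans z hzS y hyS x hxS hzy hyx,
    fun hxz => hxy (htrans x hxS z hzS y hyS hxz hzy)⟩

end MinSet

theorem revision_from_rational_order_satisfies_postulates_general
    {W : Type*} (S M : Set W) (le : W → W → Prop)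
    (hle : RationalOrder le S M) :
    RevisionPostulates S M (fun a => MinSet le (a ∩ S)) := by
  obtain ⟨-, htrans, htot, hfaith, hmin⟩ := hle
  intro a b
  simp only
  rw [Set.inter_right_comm a b S]
  refine ⟨fun x hx => hx.1.2, fun x hx => hx.1.1,
    ⟨hmin _ Set.inter_subset_right, fun ⟨x, hx⟩ => ⟨x, hx.1⟩⟩, ?_, MinSet.inter_subset b,
    fun hne => (MinSet.inter_eq_of_nonempty htrans htot Set.inter_subset_right hne).subset⟩
  rw [← hfaith, Set.inter_comm a S]
  exact MinSet.inter_eq_of_nonempty htrans htot subset_rfl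

/-- Revision constructed from a rational order satisfies the revision postulates. -/
theorem revision_from_rational_order_satisfies_postulates
    {W : Type*} (S M : Set W) (le : W → W → Prop)
    (hMS : M ⊆ S) (hle : RationalOrder le S M) :
    RevisionPostulates S M (fun a => MinSet le (a ∩ S)) :=
  revision_from_rational_order_satisfies_postulates_general S M le hle
end

section
/- Assume M ⊆ S and M is nonempty, and let r : Set W → Set W satisfy the revision postulates for (S,M). Then there exists a rational order ≤ for (S,M) such that r a = Min(a ∩ S, ≤) for every sentence a ⊆ W. (The order can be taken to be: for x,y ∈ S, x ≤ y iff x ∈ M or x ∈ r {x,y}.) -/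
def revisionOrder {W : Type*} (M : Set W) (r : Set W → Set W) (x y : W) : Prop :=
  x ∈ M ∨ x ∈ r {x, y}

namespace RevisionPostulates

variable {W : Type*} {S M : Set W} {r : Set W → Set W}

theorem subset_S (hr : RevisionPostulates S M r) (a : Set W) : r a ⊆ S :=
  (hr a a).1

theorem subset_self (hr : RevisionPostulates S M r) (a : Set W) : r a ⊆ a :=
  (hr a a).2.1

theorem nonempty_iff (hr : RevisionPostulates S M r) (a : Set W) :
    (a ∩ S).Nonempty ↔ (r a).Nonempty :=
  (hr a a).2.2.1

theorem eq_inter_of_nonempty (hr : RevisionPostulates S M r) {a : Set W}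
    (h : (M ∩ a).Nonempty) : r a = M ∩ a :=
  (hr a a).2.2.2.1 h

theorem inter_subset (hr : RevisionPostulates S M r) (a b : Set W) : r a ∩ b ⊆ r (a ∩ b) :=
  (hr a b).2.2.2.2.1

theorem subset_inter (hr : RevisionPostulates S M r) {a b : Set W}
    (h : (r a ∩ b).Nonempty) : r (a ∩ b) ⊆ r a ∩ b :=
  (hr a b).2.2.2.2.2 h

theorem mem_pair_of_mem (hr : RevisionPostulates S M r) {a : Set W} {x y : W}
    (hx : x ∈ a) (hy : y ∈ a) (hxr : x ∈ r a) : x ∈ r {x, y} := by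
  have h := hr.inter_subset a {x, y} ⟨hxr, Set.mem_insert x {y}⟩
  rwa [Set.inter_eq_right.mpr (Set.pair_subset hx hy)] at h

theorem mem_of_revisionOrder (hr : RevisionPostulates S M r) {a : Set W} {x y : W}
    (hx : x ∈ a) (hy : y ∈ a) (hxy : revisionOrder M r x y) (hyr : y ∈ r a) : x ∈ r a := by
  rcases hxy with hxM | hxr
  · rw [hr.eq_inter_of_nonempty ⟨x, hxM, hx⟩]
    exact ⟨hxM, hx⟩
  · have h := hr.subset_inter (b := {x, y}) ⟨y, hyr, Set.mem_insert_of_mem x rfl⟩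
    rw [Set.inter_eq_right.mpr (Set.pair_subset hx hy)] at h
    exact (h hxr).1

theorem revisionOrder_total (hr : RevisionPostulates S M r) {x y : W} (hx : x ∈ S) :
    revisionOrder M r x y ∨ revisionOrder M r y x := by
  obtain ⟨w, hw⟩ := (hr.nonempty_iff {x, y}).mp ⟨x, Set.mem_insert x {y}, hx⟩
  rcases hr.subset_self _ hw with rfl | rfl
  · exact Or.inl (Or.inr hw)
  · exact Or.inr (Or.inr (Set.pair_comm x w ▸ hw))

theorem revisionOrder_refl (hr : RevisionPostulates S M r) {x : W} (hx : x ∈ S) :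
    revisionOrder M r x x :=
  (hr.revisionOrder_total hx).elim id id

theorem revisionOrder_trans (hr : RevisionPostulates S M r) {x y z : W} (hx : x ∈ S)
    (hxy : revisionOrder M r x y) (hyz : revisionOrder M r y z) : revisionOrder M r x z := by
  set a : Set W := {x, y, z}
  have hxa : x ∈ a := by simp [a]
  have hya : y ∈ a := by simp [a]
  have hza : z ∈ a := by simp [a]
  have hy_x : y ∈ r a → x ∈ r a := hr.mem_of_revisionOrder hxa hya hxy
  have hz_y : z ∈ r a → y ∈ r a := hr.mem_of_revisionOrder hya hza hyz
  obtain ⟨w, hw⟩ := (hr.nonempty_iff a).mp ⟨x, hxa, hx⟩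
  have hxr : x ∈ r a := by
    rcases hr.subset_self a hw with rfl | rfl | rfl
    · exact hw
    · exact hy_x hw
    · exact hy_x (hz_y hw)
  exact Or.inr (hr.mem_pair_of_mem hxa hza hxr)

theorem eq_minSet_revisionOrder (hr : RevisionPostulates S M r) (a : Set W) :
    r a = MinSet (revisionOrder M r) (a ∩ S) := by
  ext x
  constructor
  · intro hxr
    have hxa := hr.subset_self a hxr
    refine ⟨⟨hxa, hr.subset_S a hxr⟩, ?_⟩
    rintro ⟨y, ⟨hya, -⟩, -, hxy⟩
    exact hxy (Or.inr (hr.mem_pair_of_mem hxa hya hxr))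
  · rintro ⟨⟨hxa, hxS⟩, hmin⟩
    obtain ⟨z, hz⟩ := (hr.nonempty_iff a).mp ⟨x, hxa, hxS⟩
    have hza := hr.subset_self a hz
    have hxz : revisionOrder M r x z := by
      by_contra hxz
      have hzx := (hr.revisionOrder_total hxS).resolve_left hxz
      exact hmin ⟨z, ⟨hza, hr.subset_S a hz⟩, hzx, hxz⟩
    exact hr.mem_of_revisionOrder hxa hza hxz hz

theorem rationalOrder_revisionOrder (hr : RevisionPostulates S M r) (hM : M.Nonempty) :
    RationalOrder (revisionOrder M r) S M := by
  refine ⟨fun x hx => hr.revisionOrder_refl hx,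
    fun x hx y _ z _ => hr.revisionOrder_trans hx,
    fun x hx y _ => hr.revisionOrder_total hx, ?_, ?_⟩
  · have h := hr.eq_minSet_revisionOrder Set.univ
    rw [hr.eq_inter_of_nonempty (by simpa using hM), Set.univ_inter, Set.inter_univ] at h
    exact h.symm
  · intro F hF hFne
    rw [← Set.inter_eq_left.mpr hF, ← hr.eq_minSet_revisionOrder]
    exact (hr.nonempty_iff F).mp (by rwa [Set.inter_eq_left.mpr hF])

end RevisionPostulates

theorem rational_order_exists_for_revision_general
    {W : Type*} (S M : Set W) (r : Set W → Set W)
    (hMne : M.Nonempty)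
    (hr : RevisionPostulates S M r) :
    ∃ le : W → W → Prop, RationalOrder le S M ∧
      ∀ a : Set W, r a = MinSet le (a ∩ S) :=
  ⟨revisionOrder M r, hr.rationalOrder_revisionOrder hMne, hr.eq_minSet_revisionOrder⟩

/-- Any operator satisfying the revision postulates arises from a rational order. -/
theorem rational_order_exists_for_revision
    {W : Type*} (S M : Set W) (r : Set W → Set W)
    (hMS : M ⊆ S) (hMne : M.Nonempty)
    (hr : RevisionPostulates S M r) :
    ∃ le : W → W → Prop, RationalOrder le S M ∧
      ∀ a : Set W, r a = MinSet le (a ∩ S) :=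
  rational_order_exists_for_revision_general S M r hMne hr
end

section
/- (Levi identity.) Assume M ⊆ S and let c : Set W → Set W satisfy the contraction postulates for (S,M). Define the revision operator r : Set W → Set W by the Levi identity r a = c (W \ a) ∩ a for every sentence a ⊆ W. Then r satisfies the revision postulates for (S,M). -/
/-- `c` satisfies the contraction postulates for `(S, M)`. -/
def ContractionPostulates {W : Type*} (S M : Set W) (c : Set W → Set W) : Prop :=
  ∀ a b : Set W,
    c a ⊆ S ∧
    ((S \ a).Nonempty → ¬ c a ⊆ a) ∧
    M ⊆ c a ∧
    (¬ M ⊆ a → c a = M) ∧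
    c a ∩ a ⊆ M ∧
    c (a ∩ b) ⊆ c a ∪ c b ∧
    (¬ c (a ∩ b) ⊆ a → c a ⊆ c (a ∩ b))

/-! The revision postulates for `a` are read off the contraction postulates for `aᶜ`.
Success and vacuity of contraction give consistency and vacuity of revision; the two
conjunction postulates give (∔6) and (∔7), because `aᶜ ⊆ (a ∩ b)ᶜ` and for `p ⊆ q` the
sentence `p` is the conjunction of `q` and `p ∪ qᶜ`, whose contraction is controlled by
recovery. -/

theorem Set.inter_union_compl_eq_of_subset {α : Type*} {p q : Set α} (hpq : p ⊆ q) :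
    q ∩ (p ∪ qᶜ) = p := by
  rw [Set.inter_union_distrib_left, Set.inter_compl_self, Set.union_empty,
    Set.inter_eq_right.mpr hpq]

namespace ContractionPostulates

variable {W : Type*} {S M : Set W} {c : Set W → Set W} (hc : ContractionPostulates S M c)
include hc

theorem inter_compl_subset_of_subset {p q : Set W} (hpq : p ⊆ q) : c p ∩ qᶜ ⊆ c q := by
  obtain ⟨-, -, hMc, -, -, hconj, -⟩ := hc q (p ∪ qᶜ)
  obtain ⟨-, -, -, -, hrecovery, -, -⟩ := hc (p ∪ qᶜ) q
  rw [Set.inter_union_compl_eq_of_subset hpq] at hconj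
  rintro x ⟨hxp, hxq⟩
  rcases hconj hxp with hx | hx
  · exact hx
  · exact hMc (hrecovery ⟨hx, Or.inr hxq⟩)

theorem subset_of_subset_of_not_subset {p q : Set W} (hpq : p ⊆ q) (hp : ¬ c p ⊆ q) :
    c q ⊆ c p := by
  obtain ⟨-, -, -, -, -, -, hconj⟩ := hc q (p ∪ qᶜ)
  rw [Set.inter_union_compl_eq_of_subset hpq] at hconj
  exact hconj hp

theorem levi_nonempty_iff (a : Set W) : (a ∩ S).Nonempty ↔ (c aᶜ ∩ a).Nonempty := by
  obtain ⟨hS, hsuccess, -⟩ := hc aᶜ aᶜ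
  constructor
  · rintro ⟨x, hxa, hxS⟩
    obtain ⟨y, hyc, hya⟩ := Set.not_subset.mp (hsuccess ⟨x, hxS, not_not.mpr hxa⟩)
    exact ⟨y, hyc, not_not.mp hya⟩
  · rintro ⟨x, hxc, hxa⟩
    exact ⟨x, hxa, hS hxc⟩

theorem levi_eq_of_nonempty {a : Set W} (ha : (M ∩ a).Nonempty) : c aᶜ ∩ a = M ∩ a := by
  obtain ⟨-, -, -, hvacuity, -⟩ := hc aᶜ aᶜ
  obtain ⟨x, hxM, hxa⟩ := ha
  rw [hvacuity fun h => h hxM hxa]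

theorem levi_inter_subset (a b : Set W) : c aᶜ ∩ a ∩ b ⊆ c (a ∩ b)ᶜ ∩ (a ∩ b) := by
  have hsub : aᶜ ⊆ (a ∩ b)ᶜ := Set.compl_subset_compl.mpr Set.inter_subset_left
  rintro x ⟨⟨hxc, hxa⟩, hxb⟩
  exact ⟨hc.inter_compl_subset_of_subset hsub ⟨hxc, not_not.mpr ⟨hxa, hxb⟩⟩, hxa, hxb⟩

theorem inter_subset_levi_of_nonempty {a b : Set W} (hab : (c aᶜ ∩ a ∩ b).Nonempty) :
    c (a ∩ b)ᶜ ∩ (a ∩ b) ⊆ c aᶜ ∩ a ∩ b := by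
  obtain ⟨x, ⟨hxc, hxa⟩, hxb⟩ := hab
  have hsub : aᶜ ⊆ (a ∩ b)ᶜ := Set.compl_subset_compl.mpr Set.inter_subset_left
  have hcq : c (a ∩ b)ᶜ ⊆ c aᶜ :=
    hc.subset_of_subset_of_not_subset hsub fun h => h hxc ⟨hxa, hxb⟩
  rintro y ⟨hyc, hya, hyb⟩
  exact ⟨⟨hcq hyc, hya⟩, hyb⟩

end ContractionPostulates

theorem levi_identity_general
    {W : Type*} (S M : Set W) (c : Set W → Set W)
    (hc : ContractionPostulates S M c) :
    RevisionPostulates S M (fun a => c aᶜ ∩ a) := by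
  intro a b
  exact ⟨fun x hx => (hc aᶜ aᶜ).1 hx.1, Set.inter_subset_right, hc.levi_nonempty_iff a,
    hc.levi_eq_of_nonempty, hc.levi_inter_subset a b, hc.inter_subset_levi_of_nonempty⟩

/-- Levi identity: revision obtained from a rational contraction is rational. -/
theorem levi_identity
    {W : Type*} (S M : Set W) (c : Set W → Set W)
    (hMS : M ⊆ S) (hc : ContractionPostulates S M c) :
    RevisionPostulates S M (fun a => c aᶜ ∩ a) :=
  levi_identity_general S M c hc
end

section
/- Let ≤ be a rational order for (S,M) and assume M ⊆ S. Define the contraction operator c : Set W → Set W by c a = M ∪ Min((W \ a) ∩ S, ≤) for every sentence a ⊆ W. Then c satisfies the contraction postulates for (S,M), i.e. (−̇1)–(−̇5), (−̇7) and (−̇8) all hold. -/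
/-!
For a total preorder, the minimal elements of `F` are those below every element of `F`. Hence
if `F ⊆ G` and some minimal element of `G` lies in `F`, then the minimal elements of `F` are
exactly the minimal elements of `G` lying in `F` (Arrow's choice axiom). Applied with `G = S`,
whose minimal elements form `M`, this gives vacuity, and applied with `F = aᶜ ∩ S`,
`G = (a ∩ b)ᶜ ∩ S` it gives the second conjunction postulate. Success is the existence of
minimal elements; the other postulates are set bookkeeping.
-/

section MinSet

variable {W : Type*} {le : W → W → Prop} {S F G : Set W}

theorem minSet_subset : MinSet le F ⊆ F :=
  fun _ hx => hx.1

theorem minSet_inter_subset_minSet (hFG : F ⊆ G) : MinSet le G ∩ F ⊆ MinSet le F :=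
  fun _ ⟨hx, hxF⟩ => ⟨hxF, fun ⟨y, hyF, hlt⟩ => hx.2 ⟨y, hFG hyF, hlt⟩⟩

theorem mem_minSet_iff_forall_le (htot : ∀ x ∈ S, ∀ y ∈ S, le x y ∨ le y x) (hF : F ⊆ S)
    {x : W} : x ∈ MinSet le F ↔ x ∈ F ∧ ∀ y ∈ F, le x y := by
  refine ⟨fun ⟨hxF, hx⟩ => ⟨hxF, fun y hyF => ?_⟩, fun ⟨hxF, hx⟩ => ⟨hxF, ?_⟩⟩
  · rcases htot x (hF hxF) y (hF hyF) with hxy | hyx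
    · exact hxy
    · by_contra hxy
      exact hx ⟨y, hyF, hyx, hxy⟩
  · rintro ⟨y, hyF, -, hxy⟩
    exact hxy (hx y hyF)

theorem minSet_eq_minSet_inter (htrans : ∀ x ∈ S, ∀ y ∈ S, ∀ z ∈ S, le x y → le y z → le x z)
    (htot : ∀ x ∈ S, ∀ y ∈ S, le x y ∨ le y x) (hFG : F ⊆ G) (hG : G ⊆ S)
    (hmeet : (MinSet le G ∩ F).Nonempty) : MinSet le F = MinSet le G ∩ F := by
  obtain ⟨x, hxG, hxF⟩ := hmeet
  refine (Set.subset_inter (fun z hz => ?_) minSet_subset).antisymm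
    (minSet_inter_subset_minSet hFG)
  rw [mem_minSet_iff_forall_le htot (hFG.trans hG)] at hz
  rw [mem_minSet_iff_forall_le htot hG] at hxG ⊢
  have hzx : le z x := hz.2 x hxF
  exact ⟨hFG hz.1, fun y hy =>
    htrans z (hG (hFG hz.1)) x (hG hxG.1) y (hG hy) hzx (hxG.2 y hy)⟩

end MinSet

namespace RationalOrder

variable {W : Type*} {le : W → W → Prop} {S M G : Set W}

theorem subset (hle : RationalOrder le S M) : M ⊆ S := by
  obtain ⟨-, -, -, hfaith, -⟩ := hle
  exact hfaith ▸ minSet_subset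

theorem minSet_eq_inter (hle : RationalOrder le S M) (hG : G ⊆ S) (hmeet : (M ∩ G).Nonempty) :
    MinSet le G = M ∩ G := by
  obtain ⟨-, htrans, htot, hfaith, -⟩ := hle
  subst hfaith
  exact minSet_eq_minSet_inter htrans htot hG subset_rfl hmeet

end RationalOrder

section Contraction

variable {W : Type*} (le : W → W → Prop) (S M : Set W)

def rationalContraction (a : Set W) : Set W :=
  M ∪ MinSet le (aᶜ ∩ S)

variable {le S M} (a b : Set W)

theorem rationalContraction_subset (hle : RationalOrder le S M) :
    rationalContraction le S M a ⊆ S :=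
  Set.union_subset hle.subset (minSet_subset.trans Set.inter_subset_right)

theorem rationalContraction_not_subset (hle : RationalOrder le S M) (ha : (S \ a).Nonempty) :
    ¬ rationalContraction le S M a ⊆ a := by
  obtain ⟨-, -, -, -, hmin⟩ := hle
  obtain ⟨z, hz⟩ := hmin (aᶜ ∩ S) Set.inter_subset_right (by rwa [Set.inter_comm])
  exact fun h => (minSet_subset hz).1 (h (Or.inr hz))

theorem subset_rationalContraction : M ⊆ rationalContraction le S M a :=
  Set.subset_union_left

theorem rationalContraction_eq_of_not_subset (hle : RationalOrder le S M) (hMa : ¬ M ⊆ a) :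
    rationalContraction le S M a = M := by
  obtain ⟨m, hmM, hma⟩ := Set.not_subset.mp hMa
  have hmin := hle.minSet_eq_inter (G := aᶜ ∩ S) Set.inter_subset_right
    ⟨m, hmM, hma, hle.subset hmM⟩
  rw [rationalContraction, hmin, Set.union_eq_left]
  exact Set.inter_subset_left

theorem rationalContraction_inter_self_subset : rationalContraction le S M a ∩ a ⊆ M := by
  rintro x ⟨hx | hx, hxa⟩
  · exact hx
  · exact absurd hxa (minSet_subset hx).1

theorem rationalContraction_inter_subset_union :
    rationalContraction le S M (a ∩ b) ⊆
      rationalContraction le S M a ∪ rationalContraction le S M b := by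
  rintro x (hx | hx)
  · exact Or.inl (Or.inl hx)
  · obtain ⟨hxab, hxS⟩ := minSet_subset hx
    have hcompl : ∀ c, (a ∩ b) ⊆ c → cᶜ ∩ S ⊆ (a ∩ b)ᶜ ∩ S :=
      fun c hc => Set.inter_subset_inter_left S (Set.compl_subset_compl.mpr hc)
    by_cases hxa : x ∈ a
    · have hxb : x ∉ b := fun hxb => hxab ⟨hxa, hxb⟩
      exact Or.inr (Or.inr
        (minSet_inter_subset_minSet (hcompl b Set.inter_subset_right) ⟨hx, hxb, hxS⟩))
    · exact Or.inl (Or.inr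
        (minSet_inter_subset_minSet (hcompl a Set.inter_subset_left) ⟨hx, hxa, hxS⟩))

theorem rationalContraction_subset_of_not_subset (hle : RationalOrder le S M)
    (h : ¬ rationalContraction le S M (a ∩ b) ⊆ a) :
    rationalContraction le S M a ⊆ rationalContraction le S M (a ∩ b) := by
  obtain ⟨x, hx, hxa⟩ := Set.not_subset.mp h
  have hxF : x ∈ aᶜ ∩ S := ⟨hxa, rationalContraction_subset _ hle hx⟩
  refine Set.union_subset (subset_rationalContraction _) ?_
  rcases hx with hxM | hxG
  · rw [hle.minSet_eq_inter (G := aᶜ ∩ S) Set.inter_subset_right ⟨x, hxM, hxF⟩]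
    exact Set.inter_subset_left.trans Set.subset_union_left
  · have hFG : aᶜ ∩ S ⊆ (a ∩ b)ᶜ ∩ S :=
      Set.inter_subset_inter_left S (Set.compl_subset_compl.mpr Set.inter_subset_left)
    have hG : (a ∩ b)ᶜ ∩ S ⊆ S := Set.inter_subset_right
    obtain ⟨-, htrans, htot, -, -⟩ := hle
    rw [minSet_eq_minSet_inter htrans htot hFG hG ⟨x, hxG, hxF⟩]
    exact Set.inter_subset_left.trans Set.subset_union_right

end Contraction

theorem contraction_from_rational_order_satisfies_postulates_general
    {W : Type*} (S M : Set W) (le : W → W → Prop)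
    (hle : RationalOrder le S M) :
    ContractionPostulates S M (fun a => M ∪ MinSet le (aᶜ ∩ S)) :=
  fun a b =>
    ⟨rationalContraction_subset a hle,
      rationalContraction_not_subset a hle,
      subset_rationalContraction a,
      rationalContraction_eq_of_not_subset a hle,
      rationalContraction_inter_self_subset a,
      rationalContraction_inter_subset_union a b,
      rationalContraction_subset_of_not_subset a b hle⟩

/-- Contraction constructed from a rational order satisfies the contraction postulates. -/
theorem contraction_from_rational_order_satisfies_postulates
    {W : Type*} (S M : Set W) (le : W → W → Prop)
    (hMS : M ⊆ S) (hle : RationalOrder le S M) :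
    ContractionPostulates S M (fun a => M ∪ MinSet le (aᶜ ∩ S)) :=
  contraction_from_rational_order_satisfies_postulates_general S M le hle
end

section
/- Assume M ⊆ S and M is nonempty, and let c : Set W → Set W satisfy the contraction postulates for (S,M). Then there exists a rational order ≤ for (S,M) such that c a = M ∪ Min((W \ a) ∩ S, ≤) for every sentence a ⊆ W. -/
/-! Writing `x ≤ y` for `x ∈ c {x, y}ᶜ` (`x` survives the contraction by the sentence false
exactly at `x` and `y`) gives the order. For `x, y ∉ a` the sentence `a` is
`{x, y}ᶜ ∩ (a ∪ {x, y})`, so the two conjunction postulates compare `c a` with `c {x, y}ᶜ`: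
every element of `c a \ a` lies below all of `aᶜ`, and `c a \ a` is closed downwards inside
`aᶜ`. Success makes `c a \ a` nonempty whenever `S ⊈ a`, hence `c a \ a` is exactly the set of
minimal elements of `aᶜ ∩ S`, while recovery puts `c a ∩ a` inside `M`. Faithfulness is the
case `a = ∅`, where vacuity gives `c ∅ = M`. -/

theorem Set.compl_inter_union_of_disjoint {W : Type*} {a t : Set W} (h : Disjoint a t) :
    tᶜ ∩ (a ∪ t) = a := by
  rw [Set.inter_union_distrib_left, Set.compl_inter_self, Set.union_empty,
    Set.inter_eq_right.mpr h.subset_compl_right]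

section MinSet

variable {W : Type*} {le : W → W → Prop} {F : Set W} {x y : W}

theorem mem_minSet_of_forall_le (hx : x ∈ F) (h : ∀ y ∈ F, le x y) : x ∈ MinSet le F :=
  ⟨hx, fun ⟨y, hy, _, hxy⟩ => hxy (h y hy)⟩

theorem le_of_mem_minSet (hx : x ∈ MinSet le F) (hy : y ∈ F) (hyx : le y x) : le x y :=
  by_contra fun hxy => hx.2 ⟨y, hy, hyx, hxy⟩

end MinSet

def contractionLE {W : Type*} (c : Set W → Set W) (x y : W) : Prop :=
  x ∈ c {x, y}ᶜ

namespace ContractionPostulates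

variable {W : Type*} {S M : Set W} {c : Set W → Set W} {a : Set W} {x y z : W}

theorem apply_subset (hc : ContractionPostulates S M c) (a : Set W) : c a ⊆ S :=
  (hc a a).1

theorem exists_mem_apply_notMem (hc : ContractionPostulates S M c) (hxS : x ∈ S)
    (hxa : x ∉ a) : ∃ w ∈ c a, w ∉ a :=
  Set.not_subset.mp ((hc a a).2.1 ⟨x, hxS, hxa⟩)

theorem subset_apply (hc : ContractionPostulates S M c) (a : Set W) : M ⊆ c a :=
  (hc a a).2.2.1

theorem apply_empty (hc : ContractionPostulates S M c) (hM : M.Nonempty) : c ∅ = M :=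
  (hc ∅ ∅).2.2.2.1 fun h => hM.ne_empty (Set.subset_empty_iff.mp h)

theorem mem_of_mem_apply_of_mem (hc : ContractionPostulates S M c) (hx : x ∈ c a)
    (hxa : x ∈ a) : x ∈ M :=
  (hc a a).2.2.2.2.1 ⟨hx, hxa⟩

theorem apply_inter_subset (hc : ContractionPostulates S M c) (a b : Set W) :
    c (a ∩ b) ⊆ c a ∪ c b :=
  (hc a b).2.2.2.2.2.1

theorem apply_subset_apply_inter (hc : ContractionPostulates S M c) {b : Set W}
    (h : ¬ c (a ∩ b) ⊆ a) : c a ⊆ c (a ∩ b) :=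
  (hc a b).2.2.2.2.2.2 h

theorem mem_apply_compl_of_mem (hc : ContractionPostulates S M c) {t : Set W}
    (hat : Disjoint a t) (hx : x ∈ c a) (hxt : x ∈ t) : x ∈ c tᶜ := by
  rw [← Set.compl_inter_union_of_disjoint hat] at hx
  rcases hc.apply_inter_subset _ _ hx with hx | hx
  · exact hx
  · exact hc.subset_apply _ (hc.mem_of_mem_apply_of_mem hx (Or.inr hxt))

theorem apply_compl_subset_of_mem (hc : ContractionPostulates S M c) {t : Set W}
    (hat : Disjoint a t) (hy : y ∈ c a) (hyt : y ∈ t) : c tᶜ ⊆ c a := by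
  have h := hc.apply_subset_apply_inter (a := tᶜ) (b := a ∪ t)
  rw [Set.compl_inter_union_of_disjoint hat] at h
  exact h fun hsub => hsub hy hyt

theorem contractionLE_of_mem_apply (hc : ContractionPostulates S M c) (hx : x ∈ c a)
    (hxa : x ∉ a) (hya : y ∉ a) : contractionLE c x y :=
  hc.mem_apply_compl_of_mem (by simp [hxa, hya]) hx (Set.mem_insert x {y})

theorem mem_apply_of_contractionLE (hc : ContractionPostulates S M c)
    (hxy : contractionLE c x y) (hy : y ∈ c a) (hxa : x ∉ a) (hya : y ∉ a) : x ∈ c a :=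
  hc.apply_compl_subset_of_mem (by simp [hxa, hya]) hy (Set.mem_insert_of_mem x (Set.mem_singleton y)) hxy

theorem contractionLE_total (hc : ContractionPostulates S M c) (hx : x ∈ S) (y : W) :
    contractionLE c x y ∨ contractionLE c y x := by
  obtain ⟨w, hw, hwxy⟩ := hc.exists_mem_apply_notMem (a := {x, y}ᶜ) hx (by simp)
  rw [Set.notMem_compl_iff] at hwxy
  rcases hwxy with rfl | rfl
  · exact Or.inl (hc.contractionLE_of_mem_apply hw (by simp) (by simp))
  · exact Or.inr (hc.contractionLE_of_mem_apply hw (by simp) (by simp))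

theorem contractionLE_refl (hc : ContractionPostulates S M c) (hx : x ∈ S) :
    contractionLE c x x :=
  (hc.contractionLE_total hx x).elim id id

theorem contractionLE_trans (hc : ContractionPostulates S M c) (hx : x ∈ S)
    (hxy : contractionLE c x y) (hyz : contractionLE c y z) : contractionLE c x z := by
  have hxc : x ∈ c {x, y, z}ᶜ := by
    obtain ⟨w, hw, hwxyz⟩ := hc.exists_mem_apply_notMem (a := {x, y, z}ᶜ) hx (by simp)
    rw [Set.notMem_compl_iff] at hwxyz
    have hy : y ∈ c {x, y, z}ᶜ → x ∈ c {x, y, z}ᶜ := fun hy =>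
      hc.mem_apply_of_contractionLE hxy hy (by simp) (by simp)
    rcases hwxyz with rfl | rfl | rfl
    · exact hw
    · exact hy hw
    · exact hy (hc.mem_apply_of_contractionLE hyz hw (by simp) (by simp))
  exact hc.contractionLE_of_mem_apply hxc (by simp) (by simp)

theorem mem_apply_iff_mem_minSet (hc : ContractionPostulates S M c) (hxS : x ∈ S)
    (hxa : x ∉ a) : x ∈ c a ↔ x ∈ MinSet (contractionLE c) (aᶜ ∩ S) := by
  refine ⟨fun hx => mem_minSet_of_forall_le ⟨hxa, hxS⟩ fun y hy =>
    hc.contractionLE_of_mem_apply hx hxa hy.1, fun hmin => ?_⟩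
  obtain ⟨w, hw, hwa⟩ := hc.exists_mem_apply_notMem hxS hxa
  have hxw : contractionLE c x w := le_of_mem_minSet hmin ⟨hwa, hc.apply_subset a hw⟩
    (hc.contractionLE_of_mem_apply hw hwa hxa)
  exact hc.mem_apply_of_contractionLE hxw hw hxa hwa

theorem apply_eq_union_minSet (hc : ContractionPostulates S M c) (a : Set W) :
    c a = M ∪ MinSet (contractionLE c) (aᶜ ∩ S) := by
  ext x
  constructor
  · intro hx
    by_cases hxa : x ∈ a
    · exact Or.inl (hc.mem_of_mem_apply_of_mem hx hxa)
    · exact Or.inr ((hc.mem_apply_iff_mem_minSet (hc.apply_subset a hx) hxa).mp hx)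
  · rintro (hxM | hmin)
    · exact hc.subset_apply a hxM
    · exact (hc.mem_apply_iff_mem_minSet hmin.1.2 hmin.1.1).mpr hmin

theorem minSet_contractionLE (hc : ContractionPostulates S M c) (hM : M.Nonempty) :
    MinSet (contractionLE c) S = M := by
  have h := hc.apply_eq_union_minSet ∅
  rw [hc.apply_empty hM, Set.compl_empty, Set.univ_inter] at h
  refine (Set.union_eq_left.mp h.symm).antisymm fun x hx => ?_
  exact mem_minSet_of_forall_le (hc.apply_subset ∅ (hc.subset_apply ∅ hx))
    fun y _ => hc.subset_apply _ hx

theorem minSet_contractionLE_nonempty (hc : ContractionPostulates S M c) {F : Set W}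
    (hFS : F ⊆ S) (hF : F.Nonempty) : (MinSet (contractionLE c) F).Nonempty := by
  obtain ⟨x, hx⟩ := hF
  obtain ⟨w, hw, hwF⟩ := hc.exists_mem_apply_notMem (a := Fᶜ) (hFS hx) (not_not.mpr hx)
  exact ⟨w, mem_minSet_of_forall_le (not_not.mp hwF) fun y hy =>
    hc.contractionLE_of_mem_apply hw hwF (not_not.mpr hy)⟩

theorem rationalOrder_contractionLE (hc : ContractionPostulates S M c) (hM : M.Nonempty) :
    RationalOrder (contractionLE c) S M :=
  ⟨fun _ hx => hc.contractionLE_refl hx,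
    fun _ hx _ _ _ _ hxy hyz => hc.contractionLE_trans hx hxy hyz,
    fun _ hx y _ => hc.contractionLE_total hx y,
    hc.minSet_contractionLE hM,
    fun _ hFS hF => hc.minSet_contractionLE_nonempty hFS hF⟩

end ContractionPostulates

theorem rational_order_exists_for_contraction_general
    {W : Type*} (S M : Set W) (c : Set W → Set W)
    (hMne : M.Nonempty)
    (hc : ContractionPostulates S M c) :
    ∃ le : W → W → Prop, RationalOrder le S M ∧
      ∀ a : Set W, c a = M ∪ MinSet le (aᶜ ∩ S) :=
  ⟨contractionLE c, hc.rationalOrder_contractionLE hMne, hc.apply_eq_union_minSet⟩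

/-- Any operator satisfying the contraction postulates arises from a rational order. -/
theorem rational_order_exists_for_contraction
    {W : Type*} (S M : Set W) (c : Set W → Set W)
    (hMS : M ⊆ S) (hMne : M.Nonempty)
    (hc : ContractionPostulates S M c) :
    ∃ le : W → W → Prop, RationalOrder le S M ∧
      ∀ a : Set W, c a = M ∪ MinSet le (aᶜ ∩ S) :=
  rational_order_exists_for_contraction_general S M c hMne hc
end

section
/- Assume IC is empty, so S = W, and let M ⊆ W be the set of models of KB with belief set B = {p ⊆ W : M ⊆ p}. Let * : Set W → Set (Set W) satisfy the AGM revision postulates for B. Define r : Set W → Set W by r a = ⋂₀ (* a) (the intersection of all sentences in * a). Then r satisfies the revision postulates for (W,M). -/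
/-- The consequence operator: sentences true in every common model of `X`. -/
def Cn {W : Type*} (X : Set (Set W)) : Set (Set W) := {p | ⋂₀ X ⊆ p}

/-- AGM expansion of a set of sentences `X` by a sentence `a`. -/
def Exp {W : Type*} (X : Set (Set W)) (a : Set W) : Set (Set W) := Cn (X ∪ {a})

/-- `star` satisfies the AGM revision postulates for belief set `B`. -/
def AGMRevisionPostulates {W : Type*} (B : Set (Set W))
    (star : Set W → Set (Set W)) : Prop :=
  ∀ a b : Set W,
    star a = Cn (star a) ∧
    a ∈ star a ∧
    star a ⊆ Exp B a ∧
    (aᶜ ∉ B → Exp B a ⊆ star a) ∧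
    ((∅ : Set W) ∈ star a ↔ a = ∅) ∧
    star (a ∩ b) ⊆ Exp (star a) b ∧
    (bᶜ ∉ star a → Exp (star a) b ⊆ star (a ∩ b))

/-!
`r a = ⋂₀ (star a)` is the set of models of the revised belief set. Every belief set involved is
deductively closed, hence determined by its models: `p ∈ X ↔ ⋂₀ X ⊆ p`; the models of `X # a` are
`⋂₀ X ∩ a`, those of `{p | M ⊆ p}` are `M`, and `bᶜ ∈ X` says that `X` has no model in `b`. Under
this dictionary, with inclusions of belief sets reversing into inclusions of model sets, each AGM
postulate becomes the matching model-level postulate.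
-/

section

variable {W : Type*}

theorem sInter_Cn (X : Set (Set W)) : ⋂₀ Cn X = ⋂₀ X :=
  (Set.sInter_subset_sInter fun _ hp => Set.sInter_subset_of_mem hp).antisymm fun _ hx _ hp => hp hx

theorem sInter_Exp (X : Set (Set W)) (a : Set W) : ⋂₀ Exp X a = ⋂₀ X ∩ a := by
  rw [Exp, sInter_Cn, Set.sInter_union, Set.sInter_singleton]

theorem mem_iff_sInter_subset_of_eq_Cn {X : Set (Set W)} (hX : X = Cn X) (p : Set W) :
    p ∈ X ↔ ⋂₀ X ⊆ p :=
  Set.ext_iff.mp hX p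

theorem compl_mem_iff_of_eq_Cn {X : Set (Set W)} (hX : X = Cn X) (b : Set W) :
    bᶜ ∈ X ↔ ¬(⋂₀ X ∩ b).Nonempty := by
  rw [mem_iff_sInter_subset_of_eq_Cn hX, Set.subset_compl_iff_disjoint_right,
    Set.not_nonempty_iff_eq_empty, Set.disjoint_iff_inter_eq_empty]

theorem sInter_setOf_superset (M : Set W) : ⋂₀ {p | M ⊆ p} = M :=
  csInf_Ici

theorem Cn_setOf_superset (M : Set W) : Cn {p | M ⊆ p} = {p | M ⊆ p} := by
  simp only [Cn, sInter_setOf_superset]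

namespace AGMRevisionPostulates

variable {B : Set (Set W)} {star : Set W → Set (Set W)}

theorem sInter_subset (h : AGMRevisionPostulates B star) (a : Set W) : ⋂₀ star a ⊆ a :=
  Set.sInter_subset_of_mem (h a a).2.1

theorem sInter_nonempty_iff (h : AGMRevisionPostulates B star) (a : Set W) :
    (⋂₀ star a).Nonempty ↔ a.Nonempty := by
  obtain ⟨closed, -, -, -, consistency, -, -⟩ := h a a
  rw [mem_iff_sInter_subset_of_eq_Cn closed, Set.subset_empty_iff] at consistency
  rw [Set.nonempty_iff_ne_empty, Set.nonempty_iff_ne_empty]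
  exact not_congr consistency

theorem sInter_eq_of_compl_notMem (h : AGMRevisionPostulates B star) {a : Set W}
    (ha : aᶜ ∉ B) : ⋂₀ star a = ⋂₀ B ∩ a := by
  obtain ⟨-, -, inclusion, vacuity, -, -, -⟩ := h a a
  rw [inclusion.antisymm (vacuity ha), sInter_Exp]

theorem sInter_inter_subset (h : AGMRevisionPostulates B star) (a b : Set W) :
    ⋂₀ star a ∩ b ⊆ ⋂₀ star (a ∩ b) := by
  obtain ⟨-, -, -, -, -, subexpansion, -⟩ := h a b
  rw [← sInter_Exp]
  exact Set.sInter_subset_sInter subexpansion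

theorem sInter_inter_of_nonempty (h : AGMRevisionPostulates B star) (a b : Set W)
    (hab : (⋂₀ star a ∩ b).Nonempty) : ⋂₀ star (a ∩ b) ⊆ ⋂₀ star a ∩ b := by
  obtain ⟨closed, -, -, -, -, -, superexpansion⟩ := h a b
  rw [← sInter_Exp]
  exact Set.sInter_subset_sInter
    (superexpansion ((compl_mem_iff_of_eq_Cn closed b).not_left.mpr hab))

end AGMRevisionPostulates

end

/-- An AGM revision on belief sets induces a rational model-level revision
(when `IC` is empty, i.e. `S = W`). -/
theorem AGM_revision_induces_revision
    {W : Type*} (M : Set W) (star : Set W → Set (Set W))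
    (hstar : AGMRevisionPostulates {p : Set W | M ⊆ p} star) :
    RevisionPostulates Set.univ M (fun a => ⋂₀ (star a)) := by
  intro a b
  refine ⟨Set.subset_univ _, hstar.sInter_subset a, ?_, fun hMa => ?_,
    hstar.sInter_inter_subset a b, hstar.sInter_inter_of_nonempty a b⟩
  · rw [Set.inter_univ, hstar.sInter_nonempty_iff]
  · have hcompl : aᶜ ∉ {p | M ⊆ p} := by
      rwa [compl_mem_iff_of_eq_Cn (Cn_setOf_superset M).symm, sInter_setOf_superset, not_not]
    rw [← sInter_setOf_superset M]
    exact hstar.sInter_eq_of_compl_notMem hcompl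
end

section
/- Assume IC is empty, so S = W, and let M ⊆ W be the set of models of KB with belief set B = {p ⊆ W : M ⊆ p}. Let c : Set W → Set W satisfy the contraction postulates for (W,M). Define ⊖ : Set W → Set (Set W) by ⊖ a = {p ⊆ W : c a ⊆ p}. Then ⊖ satisfies the AGM contraction postulates for B, i.e. (−1)–(−4), (−6), (−7) and (−8) all hold. -/
/-- `om` satisfies the AGM contraction postulates for belief set `B`. -/
def AGMContractionPostulates {W : Type*} (B : Set (Set W))
    (om : Set W → Set (Set W)) : Prop :=
  ∀ a b : Set W,
    om a = Cn (om a) ∧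
    om a ⊆ B ∧
    (a ∉ B → om a = B) ∧
    (a ≠ Set.univ → a ∉ om a) ∧
    B ⊆ Exp (om a) a ∧
    om a ∩ om b ⊆ om (a ∩ b) ∧
    (a ∉ om (a ∩ b) → om (a ∩ b) ⊆ om a)

section

variable {W : Type*}

theorem sInter_Ici (m : Set W) : ⋂₀ Set.Ici m = m :=
  csInf_Ici

theorem Cn_Ici (m : Set W) : Cn (Set.Ici m) = Set.Ici m := by
  rw [Cn, sInter_Ici]
  rfl

theorem Exp_Ici (m a : Set W) : Exp (Set.Ici m) a = Set.Ici (m ∩ a) := by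
  rw [Exp, Cn, Set.sInter_union, sInter_Ici, Set.sInter_singleton]
  rfl

end

/-- A rational model-level contraction induces an AGM contraction on belief sets
(when `IC` is empty, i.e. `S = W`). -/
theorem contraction_induces_AGM_contraction
    {W : Type*} (M : Set W) (c : Set W → Set W)
    (hc : ContractionPostulates Set.univ M c) :
    AGMContractionPostulates {p : Set W | M ⊆ p}
      (fun a => {p : Set W | c a ⊆ p}) := by
  change AGMContractionPostulates (Set.Ici M) fun a => Set.Ici (c a)
  intro a b
  obtain ⟨-, hsucc, hincl, hvac, hrec, hconj1, hconj2⟩ := hc a b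
  refine ⟨?closure, ?inclusion, ?vacuity, ?success, ?recovery, ?conjunction₁, ?conjunction₂⟩
  case closure => exact (Cn_Ici _).symm
  case inclusion => exact Set.Ici_subset_Ici.2 hincl
  case vacuity => exact fun ha => congrArg Set.Ici (hvac ha)
  case success =>
    exact fun ha => hsucc (by rwa [← Set.compl_eq_univ_sdiff, Set.nonempty_compl])
  case recovery =>
    rw [Exp_Ici]
    exact Set.Ici_subset_Ici.2 hrec
  case conjunction₁ =>
    rw [Set.Ici_inter_Ici]
    exact Set.Ici_subset_Ici.2 hconj1
  case conjunction₂ => exact fun ha => Set.Ici_subset_Ici.2 (hconj2 ha)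
end

section
/- (Models of the disjunction of two explanations.) Let Δ₁ and Δ₂ be two sets of sentences (in the paper, two minimal abductive explanations for a sentence α with respect to KB). Define their disjunction Δ₁ ∨ Δ₂ = (Δ₁ ∩ Δ₂) ∪ { x ∪ y : x ∈ Δ₁ \ Δ₂, y ∈ Δ₂ \ Δ₁ } (the union x ∪ y of two sentences being the disjunction of the sentences). Then the models of Δ₁ ∨ Δ₂ are exactly the models of Δ₁ together with the models of Δ₂: ⋂₀ (Δ₁ ∨ Δ₂) = (⋂₀ Δ₁) ∪ (⋂₀ Δ₂). -/
/-!
By distributivity, the models of the pairwise disjunctions `{a ∪ b | a ∈ Δ₁, b ∈ Δ₂}` are the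
models of `Δ₁` together with those of `Δ₂`. Every member of `Δ₁ ∨ Δ₂` is such a disjunction
(a common sentence `s` is `s ∪ s`), and conversely every `a ∪ b` is entailed by a member of
`Δ₁ ∨ Δ₂`: by `a` if `a ∈ Δ₂`, by `b` if `b ∈ Δ₁`, and by itself otherwise.
-/

def disjExpl {W : Type*} (D₁ D₂ : Set (Set W)) : Set (Set W) :=
  (D₁ ∩ D₂) ∪ {s | ∃ x ∈ D₁ \ D₂, ∃ y ∈ D₂ \ D₁, s = x ∪ y}

open Set

theorem Set.sInter_subset_sInter_of_forall_exists_subset {α : Type*} {S T : Set (Set α)}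
    (h : ∀ s ∈ S, ∃ t ∈ T, t ⊆ s) : ⋂₀ T ⊆ ⋂₀ S := fun _ hw s hs =>
  let ⟨t, ht, hts⟩ := h s hs
  hts (hw t ht)

theorem Set.sInter_image2_union {α : Type*} (S T : Set (Set α)) :
    ⋂₀ image2 (· ∪ ·) S T = ⋂₀ S ∪ ⋂₀ T := by
  rw [sInter_union_sInter, ← image2_mk_eq_prod, biInter_image2, sInter_image2]

section disjExpl

variable {W : Type*} {D₁ D₂ : Set (Set W)}

theorem disjExpl_subset_image2_union : disjExpl D₁ D₂ ⊆ image2 (· ∪ ·) D₁ D₂ := by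
  rintro s (⟨hs₁, hs₂⟩ | ⟨x, ⟨hx, -⟩, y, ⟨hy, -⟩, rfl⟩)
  · exact ⟨s, hs₁, s, hs₂, union_self s⟩
  · exact mem_image2_of_mem hx hy

theorem exists_mem_disjExpl_subset_union {a b : Set W} (ha : a ∈ D₁) (hb : b ∈ D₂) :
    ∃ s ∈ disjExpl D₁ D₂, s ⊆ a ∪ b := by
  by_cases ha₂ : a ∈ D₂
  · exact ⟨a, Or.inl ⟨ha, ha₂⟩, subset_union_left⟩
  by_cases hb₁ : b ∈ D₁
  · exact ⟨b, Or.inl ⟨hb₁, hb⟩, subset_union_right⟩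
  · exact ⟨a ∪ b, Or.inr ⟨a, ⟨ha, ha₂⟩, b, ⟨hb, hb₁⟩, rfl⟩, subset_rfl⟩

end disjExpl

/-- The models of the disjunction of two explanations are exactly the models of
the first together with the models of the second. -/
theorem models_of_disjunction
    {W : Type*} (D₁ D₂ : Set (Set W)) :
    ⋂₀ (disjExpl D₁ D₂) = (⋂₀ D₁) ∪ (⋂₀ D₂) := by
  rw [← sInter_image2_union]
  refine subset_antisymm ?_ (sInter_subset_sInter disjExpl_subset_image2_union)
  apply sInter_subset_sInter_of_forall_exists_subset
  rintro _ ⟨a, ha, b, hb, rfl⟩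
  exact exists_mem_disjExpl_subset_union ha hb
end

section
/- Assume M ⊆ S and M is nonempty (KB is consistent). Let a ⊆ W be a sentence that is rejected in KB, i.e. M ∩ a = ∅, and let X be any nonempty subset of a ∩ S (in the paper, X = Mod(KB ∔ α) is a nonempty subset of Mod(∨Δ•) = Mod({α} ∪ IC), where Δ• is the set of all minimal abductive explanations for α with respect to KB). Then there exists a rational order ≤ for (S,M) such that Min(a ∩ S, ≤) = X. -/
section RankOrder

variable {W β : Type*} [LinearOrder β] (f : W → β)

theorem minSet_rank_le (F : Set W) :
    MinSet (fun x y => f x ≤ f y) F = {x | x ∈ F ∧ ∀ y ∈ F, f x ≤ f y} := by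
  ext x
  simp only [MinSet, Set.mem_ofPred_eq, not_exists, not_and, not_not]
  refine and_congr_right fun _ => forall₂_congr fun y _ => ⟨fun h => ?_, fun h _ => h⟩
  rcases le_total (f x) (f y) with hxy | hyx
  · exact hxy
  · exact h hyx

theorem minSet_rank_le_nonempty [WellFoundedLT β] {F : Set W} (hF : F.Nonempty) :
    (MinSet (fun x y => f x ≤ f y) F).Nonempty := by
  refine ⟨Function.argminOn f F hF, ?_⟩
  rw [minSet_rank_le]
  exact ⟨Function.argminOn_mem f F hF,
    fun y hy => le_of_not_gt (Function.not_lt_argminOn f F hy)⟩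

theorem minSet_rank_le_eq {F G : Set W} {c : β} (hG : G.Nonempty) (hGF : G ⊆ F)
    (hGc : ∀ x ∈ G, f x = c) (hlt : ∀ x ∈ F, x ∉ G → c < f x) :
    MinSet (fun x y => f x ≤ f y) F = G := by
  rw [minSet_rank_le]
  ext x
  refine ⟨fun ⟨hxF, hmin⟩ => ?_, fun hxG => ⟨hGF hxG, fun y hyF => ?_⟩⟩
  · by_contra hxG
    obtain ⟨g, hg⟩ := hG
    have hxg := hmin g (hGF hg)
    rw [hGc g hg] at hxg
    exact (hlt x hxF hxG).not_ge hxg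
  · rw [hGc x hxG]
    by_cases hyG : y ∈ G
    · exact (hGc y hyG).ge
    · exact (hlt y hyF hyG).le

theorem rationalOrder_rank_le [WellFoundedLT β] {S M : Set W}
    (hM : MinSet (fun x y => f x ≤ f y) S = M) :
    RationalOrder (fun x y => f x ≤ f y) S M :=
  ⟨fun _ _ => le_rfl, fun _ _ _ _ _ _ => le_trans, fun _ _ _ _ => le_total _ _, hM,
    fun _ _ hF => minSet_rank_le_nonempty f hF⟩

end RankOrder

noncomputable def tierRank {W : Type*} (M X : Set W) (w : W) : ℕ := by
  classical exact if w ∈ M then 0 else if w ∈ X then 1 else 2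

section TierRank

variable {W : Type*} {M X : Set W} {w : W}

theorem tierRank_eq_zero_iff : tierRank M X w = 0 ↔ w ∈ M := by
  unfold tierRank
  split_ifs <;> simp_all

theorem tierRank_of_not_mem_of_mem (hM : w ∉ M) (hX : w ∈ X) : tierRank M X w = 1 := by
  simp [tierRank, hM, hX]

theorem tierRank_of_not_mem_of_not_mem (hM : w ∉ M) (hX : w ∉ X) : tierRank M X w = 2 := by
  simp [tierRank, hM, hX]

end TierRank

/-- Revision of `KB` by a rejected sentence can be realized by any nonempty
subset of the models of `{α} ∪ IC`. -/
theorem rational_order_for_rejected_revision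
    {W : Type*} (S M a X : Set W)
    (hMS : M ⊆ S) (hMne : M.Nonempty)
    (hrej : M ∩ a = ∅)
    (hX : X ⊆ a ∩ S) (hXne : X.Nonempty) :
    ∃ le : W → W → Prop, RationalOrder le S M ∧ MinSet le (a ∩ S) = X := by
  have hnotM : ∀ x ∈ a ∩ S, x ∉ M := fun x hx hxM =>
    (Set.eq_empty_iff_forall_notMem.mp hrej) x ⟨hxM, hx.1⟩
  refine ⟨fun x y => tierRank M X x ≤ tierRank M X y, rationalOrder_rank_le _ ?_, ?_⟩
  · refine minSet_rank_le_eq _ hMne hMS (fun x => tierRank_eq_zero_iff.mpr) fun x _ hxM => ?_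
    exact Nat.pos_of_ne_zero (mt tierRank_eq_zero_iff.mp hxM)
  · refine minSet_rank_le_eq _ hXne hX
      (fun x hx => tierRank_of_not_mem_of_mem (hnotM x (hX hx)) hx) fun x hx hxX => ?_
    rw [tierRank_of_not_mem_of_not_mem (hnotM x hx) hxX]
    exact one_lt_two
end

section
/- Assume M ⊆ S and M is nonempty (KB is consistent). Let a ⊆ W be a sentence that is rejected in KB, i.e. M ∩ a = ∅, let D ⊆ a ∩ S (in the paper, D = Mod(Δ) for a single abductive explanation Δ for α with respect to KB, so that D is contained in Mod({α} ∪ IC)), and let X be any nonempty subset of D. Then there exists a rational order ≤ for (S,M) such that Min(a ∩ S, ≤) = X. Hence revision of KB by a rejected sentence α can be realized by computing just one abductive explanation of α with respect to KB. -/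
section RankOrder

variable {W α : Type*} [LinearOrder α]

theorem minSet_rank_eq (f : W → α) (F : Set W) :
    MinSet (fun x y => f x ≤ f y) F = {x ∈ F | ∀ y ∈ F, f x ≤ f y} := by
  ext x
  simp only [MinSet, ← lt_iff_le_not_ge, not_exists, not_and, not_lt, Set.mem_ofPred_eq]

theorem minSet_rank_eq_of_lt {f : W → α} {A F : Set W} {c : α} (hAF : A ⊆ F)
    (hA : A.Nonempty) (hfA : ∀ x ∈ A, f x = c) (hlt : ∀ y ∈ F, y ∉ A → c < f y) :
    MinSet (fun x y => f x ≤ f y) F = A := by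
  rw [minSet_rank_eq]
  ext x
  refine ⟨fun ⟨hxF, hmin⟩ => ?_, fun hx => ⟨hAF hx, fun y hy => ?_⟩⟩
  · by_contra hxA
    obtain ⟨z, hz⟩ := hA
    exact (hlt x hxF hxA).not_ge (hfA z hz ▸ hmin z (hAF hz))
  · by_cases hyA : y ∈ A
    · rw [hfA x hx, hfA y hyA]
    · exact (hfA x hx).symm ▸ (hlt y hy hyA).le

theorem rationalOrder_rank [WellFoundedLT α] (f : W → α) {S M : Set W}
    (hmin : MinSet (fun x y => f x ≤ f y) S = M) :
    RationalOrder (fun x y => f x ≤ f y) S M := by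
  refine ⟨fun _ _ => le_rfl, fun _ _ _ _ _ _ => le_trans, fun x _ y _ => le_total (f x) (f y),
    hmin, fun F _ hF => ?_⟩
  rw [minSet_rank_eq]
  obtain ⟨z, hz⟩ := hF
  exact ⟨Function.argminOn f F ⟨z, hz⟩, Function.argminOn_mem f F _,
    fun y hy => Function.argminOn_le f F hy⟩

end RankOrder

open Classical in
noncomputable def revisionRank {W : Type*} (M X : Set W) (x : W) : ℕ :=
  if x ∈ M then 0 else if x ∈ X then 1 else 2

section RevisionRank

variable {W : Type*} {M X : Set W} {x : W}

theorem revisionRank_of_mem_left (hx : x ∈ M) : revisionRank M X x = 0 := by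
  simp [revisionRank, hx]

theorem revisionRank_of_mem_right (hxM : x ∉ M) (hxX : x ∈ X) : revisionRank M X x = 1 := by
  simp [revisionRank, hxM, hxX]

theorem revisionRank_of_notMem (hxM : x ∉ M) (hxX : x ∉ X) : revisionRank M X x = 2 := by
  simp [revisionRank, hxM, hxX]

theorem revisionRank_pos (hxM : x ∉ M) : 0 < revisionRank M X x := by
  unfold revisionRank
  split_ifs <;> simp

end RevisionRank

/-- Revision of `KB` by a rejected sentence can be realized by computing just
one abductive explanation: any nonempty subset `X` of the models `D` of a single
abductive explanation can serve as the set of models of the revision. -/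
theorem rational_order_for_single_explanation_revision
    {W : Type*} (S M a D X : Set W)
    (hMS : M ⊆ S) (hMne : M.Nonempty)
    (hrej : M ∩ a = ∅)
    (hD : D ⊆ a ∩ S) (hX : X ⊆ D) (hXne : X.Nonempty) :
    ∃ le : W → W → Prop, RationalOrder le S M ∧ MinSet le (a ∩ S) = X := by
  have hXaS : X ⊆ a ∩ S := hX.trans hD
  have hnotM : ∀ y ∈ a ∩ S, y ∉ M := fun y hy hyM => hrej.subset ⟨hyM, hy.1⟩
  refine ⟨fun x y => revisionRank M X x ≤ revisionRank M X y, rationalOrder_rank _ ?_, ?_⟩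
  · exact minSet_rank_eq_of_lt hMS hMne (fun _ => revisionRank_of_mem_left)
      (fun y _ hyM => revisionRank_pos hyM)
  · refine minSet_rank_eq_of_lt hXaS hXne
      (fun x hx => revisionRank_of_mem_right (hnotM x (hXaS hx)) hx) fun y hy hyX => ?_
    rw [revisionRank_of_notMem (hnotM y hy) hyX]
    exact Nat.one_lt_two
end
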